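/- Let G be a two-unicast layered network in which no pair of disjoint paths from s_1 to d_1 and from s_2 to d_2 has manageable interference. Let P_22 be a path from s_2 to d_2 and let Q_11 and Z_11 be paths from s_1 to d_1, each disjoint from P_22. Suppose the pair (Q_11,P_22) has (s_1,d_1)-manageable but not (s_2,d_2)-manageable interference, and the pair (Z_11,P_22) has (s_2,d_2)-manageable but not (s_1,d_1)-manageable interference. Then: for the pair (Z_11,P_22), n_1(G[V]) = n_1^D = 1 (exactly one node causes interference on Z_11, and it is a node of P_22 causing direct interference); for the pair (Q_11,P_22), n_2(G[V]) = n_2^D = 1 (exactly one node causes interference on P_22, and it is a node of Q_11 causing direct interference); for the pair (Q_11,P_22), no node of P_22 causes direct interference on Q_11 (n_1^D = 0); and for the pair (Z_11,P_22), no node of Z_11 causes direct interference on P_22 (n_2^D = 0). -/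

import Mathlib

open List

/-- `IsPath E p u w` : the nonempty list `p` of vertices is a directed path
from `u` to `w` with respect to the edge relation `E`. -/
def IsPath {V : Type*} (E : V → V → Prop) (p : List V) (u w : V) : Prop :=
  p ≠ [] ∧ p.head? = some u ∧ p.getLast? = some w ∧ p.Chain' E

/-- `Reaches E u w` (written `u ~> w`) : there is a directed path from `u` to `w`. -/
def Reaches {V : Type*} (E : V → V → Prop) (u w : V) : Prop :=
  ∃ p, IsPath E p u w

/-- A two-unicast layered network: a finite directed graph, with two sources
`s1, s2` and two destinations `d1, d2` (all four distinct), vertices partitioned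
into layers `1, ..., r` such that every edge goes from a layer to the next one,
the first layer is `{s1, s2}`, the last layer is `{d1, d2}`, and each source
reaches its corresponding destination. -/
structure TwoUnicastNetwork (V : Type*) [Fintype V] where
  E : V → V → Prop
  s1 : V
  s2 : V
  d1 : V
  d2 : V
  r : ℕ
  layer : V → ℕ
  layer_pos : ∀ v, 1 ≤ layer v
  layer_le : ∀ v, layer v ≤ r
  edge_layer : ∀ u w, E u w → layer w = layer u + 1
  s_ne : s1 ≠ s2
  d_ne : d1 ≠ d2
  sd_ne : ∀ s d, (s = s1 ∨ s = s2) → (d = d1 ∨ d = d2) → s ≠ d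
  first_layer : ∀ v, layer v = 1 ↔ v = s1 ∨ v = s2
  last_layer : ∀ v, layer v = r ↔ v = d1 ∨ v = d2
  conn1 : Reaches E s1 d1
  conn2 : Reaches E s2 d2

/-- `InterferesOn N S Ri srcOther v` : within the induced subgraph `G[S]`, the
node `v` causes interference on the path `Ri` : `v ∈ S`, `v ∉ Ri`, there is an
edge (inside `G[S]`) from `v` into a node of `Ri`, and there is a path from the
other source `srcOther` to `v` lying inside `G[S]` and disjoint from `Ri`. -/
def InterferesOn {V : Type*} [Fintype V] (N : TwoUnicastNetwork V) (S : Set V)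
    (Ri : List V) (srcOther : V) (v : V) : Prop :=
  v ∈ S ∧ v ∉ Ri ∧ (∃ w ∈ Ri, w ∈ S ∧ N.E v w) ∧
    ∃ q, IsPath N.E q srcOther v ∧ (∀ x ∈ q, x ∈ S) ∧ ∀ x ∈ q, x ∉ Ri

/-- `n_i(G[S])` : the number of nodes causing interference on `Ri` within the
induced subgraph `G[S]`, the interfering path coming from `srcOther`. -/
noncomputable def nInterf {V : Type*} [Fintype V] (N : TwoUnicastNetwork V)
    (S : Set V) (Ri : List V) (srcOther : V) : ℕ :=
  {v | InterferesOn N S Ri srcOther v}.ncard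

/-- `n_i^D` : the number of nodes of the other path `Rother` causing (direct)
interference on `Ri` in `G`. -/
noncomputable def nDirect {V : Type*} [Fintype V] (N : TwoUnicastNetwork V)
    (Ri Rother : List V) (srcOther : V) : ℕ :=
  {v | InterferesOn N Set.univ Ri srcOther v ∧ v ∈ Rother}.ncard

/-- The pair `(R1, R2)` (paths `s1 → d1` and `s2 → d2`) has manageable
interference: there is `S ⊇ R1 ∪ R2` with `n_1(G[S]) ≠ 1` and `n_2(G[S]) ≠ 1`. -/
def Manageable {V : Type*} [Fintype V] (N : TwoUnicastNetwork V)
    (R1 R2 : List V) : Prop :=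
  ∃ S : Set V, (∀ x ∈ R1, x ∈ S) ∧ (∀ x ∈ R2, x ∈ S) ∧
    nInterf N S R1 N.s2 ≠ 1 ∧ nInterf N S R2 N.s1 ≠ 1

/-- The pair `(R1, R2)` has `(s1,d1)`-manageable interference. -/
def Manageable1 {V : Type*} [Fintype V] (N : TwoUnicastNetwork V)
    (R1 R2 : List V) : Prop :=
  ∃ S : Set V, (∀ x ∈ R1, x ∈ S) ∧ (∀ x ∈ R2, x ∈ S) ∧ nInterf N S R1 N.s2 ≠ 1

/-- The pair `(R1, R2)` has `(s2,d2)`-manageable interference. -/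
def Manageable2 {V : Type*} [Fintype V] (N : TwoUnicastNetwork V)
    (R1 R2 : List V) : Prop :=
  ∃ S : Set V, (∀ x ∈ R1, x ∈ S) ∧ (∀ x ∈ R2, x ∈ S) ∧ nInterf N S R2 N.s1 ≠ 1

/-- Removal of the vertex `v` disconnects `a` from `b` :
every path from `a` to `b` contains `v`. -/
def CutVert {V : Type*} [Fintype V] (N : TwoUnicastNetwork V) (v a b : V) : Prop :=
  ∀ p, IsPath N.E p a b → v ∈ p

/-!
Non-`(s₁,d₁)`-manageability of `(Z₁₁, P₂₂)` says that every `G[S] ⊇ Z₁₁ ∪ P₂₂` has exactly one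
interferer on `Z₁₁`; comparing `S = Z₁₁ ∪ P₂₂` with `S = V` shows that it is one node `β`, lying on
`P₂₂`. The same holds for the interference on `P₂₂` in the pair `(Q₁₁, P₂₂)`. A witness `S` of
`(s₂,d₂)`-manageability of `(Z₁₁, P₂₂)` must then have no interferer on `P₂₂` at all, so no node of
`Z₁₁` interferes directly on `P₂₂`.

Every walk from `s₂` to `d₁` enters `Z₁₁` through an edge out of `β`. For a node `v ∈ P₂₂` with an
edge `v → w` into `Q₁₁`, the walk `s₂ → v → w → d₁` along `P₂₂` and `Q₁₁` forces `v = β` and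
`w ∈ Z₁₁`. Then any interferer on `Q₁₁` also enters `Z₁₁` through `β`; since the graph is layered
the entry edge lands on `w ∈ Q₁₁`, and so the interferer is `v` itself. Hence `(Q₁₁, P₂₂)` would
have exactly one interferer on `Q₁₁` in every `G[S]`, contradicting its `(s₁,d₁)`-manageability.
-/
namespace IsPath

variable {V : Type*} {E : V → V → Prop} {p : List V} {s t : V}

theorem singleton (a : V) : IsPath E [a] a a :=
  ⟨List.cons_ne_nil a [], rfl, rfl, List.isChain_singleton a⟩

theorem head_mem (hp : IsPath E p s t) : s ∈ p :=
  List.mem_of_mem_head? hp.2.1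

theorem last_mem (hp : IsPath E p s t) : t ∈ p :=
  List.mem_of_mem_getLast? hp.2.2.1

theorem exists_prefix (hp : IsPath E p s t) {x : V} (hx : x ∈ p) :
    ∃ l, IsPath E l s x ∧ ∀ y ∈ l, y ∈ p := by
  obtain ⟨l₁, l₂, rfl⟩ := List.append_of_mem hx
  have hsplit : l₁ ++ x :: l₂ = (l₁ ++ [x]) ++ l₂ := by simp
  obtain ⟨-, hs, -, hc⟩ := hp
  rw [hsplit] at hs hc
  refine ⟨l₁ ++ [x], ⟨by simp, ?_, by simp, (List.isChain_append.mp hc).1⟩, ?_⟩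
  · rwa [List.head?_append_of_ne_nil _ (by simp)] at hs
  · intro y hy
    rw [hsplit]
    exact List.mem_append_left _ hy

theorem exists_suffix (hp : IsPath E p s t) {x : V} (hx : x ∈ p) :
    ∃ l, IsPath E l x t ∧ ∀ y ∈ l, y ∈ p := by
  obtain ⟨l₁, l₂, rfl⟩ := List.append_of_mem hx
  obtain ⟨-, -, ht, hc⟩ := hp
  refine ⟨x :: l₂, ⟨by simp, rfl, ?_, (List.isChain_append.mp hc).2.1⟩, ?_⟩
  · rwa [List.getLast?_append_cons] at ht
  · intro y hy
    exact List.mem_append_right _ hy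

theorem append {A B : List V} {a b : V} (hA : IsPath E A s a) (hab : E a b)
    (hB : IsPath E B b t) : IsPath E (A ++ B) s t := by
  refine ⟨by simp [hA.1], ?_, ?_, ?_⟩
  · rw [List.head?_append_of_ne_nil _ hA.1, hA.2.1]
  · rw [List.getLast?_append_of_ne_nil _ hB.1, hB.2.2.1]
  · refine List.isChain_append.mpr ⟨hA.2.2.2, hB.2.2.2, ?_⟩
    simp only [hA.2.2.1, hB.2.1, Option.mem_def, Option.some.injEq]
    rintro x rfl y rfl
    exact hab

theorem exists_first_entry (hp : IsPath E p s t) {T : Set V} (hs : s ∉ T) (ht : t ∈ T) :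
    ∃ pre u z suf, p = pre ++ u :: z :: suf ∧ IsPath E (pre ++ [u]) s u ∧
      (∀ x ∈ pre ++ [u], x ∉ T) ∧ z ∈ T ∧ E u z := by
  induction p generalizing s with
  | nil => exact absurd rfl hp.1
  | cons a rest ih =>
    obtain ⟨-, hs', ht', hc⟩ := hp
    obtain rfl : a = s := by simpa using hs'
    cases rest with
    | nil =>
      obtain rfl : a = t := by simpa using ht'
      exact absurd ht hs
    | cons b rest =>
      have hab : E a b := (List.isChain_cons_cons.mp hc).1
      by_cases hb : b ∈ T
      · exact ⟨[], a, b, rest, rfl, singleton a, by simpa using hs, hb, hab⟩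
      obtain ⟨pre, u, z, suf, heq, hpre, hT, hz, huz⟩ :=
        ih ⟨by simp, rfl, by simpa using ht', (List.isChain_cons_cons.mp hc).2⟩ hb
      refine ⟨a :: pre, u, z, suf, by rw [heq, List.cons_append], ?_, ?_, hz, huz⟩
      · exact (singleton a).append hab hpre
      · simpa [hs] using hT

end IsPath

theorem List.adjacent_mem_append {α : Type*} {A B pre suf : List α} {u z : α}
    (h : A ++ B = pre ++ u :: z :: suf) :
    z ∈ A ∨ (A.getLast? = some u ∧ B.head? = some z) ∨ u ∈ B := by
  rw [show pre ++ u :: z :: suf = (pre ++ [u]) ++ z :: suf by simp,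
    List.append_eq_append_iff] at h
  rcases h with ⟨C, hA, rfl⟩ | ⟨C, rfl, hB⟩
  · rcases C.eq_nil_or_concat with rfl | ⟨C, c, rfl⟩
    · rw [List.append_nil] at hA
      simp [← hA]
    · have : u = c := by simpa using congrArg List.getLast? hA
      simp [this]
  · cases C with
    | nil =>
      rw [List.nil_append] at hB
      simp [← hB]
    | cons c C =>
      obtain ⟨rfl, -⟩ := List.cons_eq_cons.mp hB
      simp

namespace TwoUnicastNetwork

variable {V : Type*} [Fintype V] (N : TwoUnicastNetwork V)

theorem eq_of_layer_eq {p : List V} (hp : p.IsChain N.E) {x y : V} (hx : x ∈ p) (hy : y ∈ p)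
    (h : N.layer x = N.layer y) : x = y := by
  have hlt : (p.map N.layer).IsChain (· < ·) :=
    (List.isChain_map N.layer).mpr (hp.imp fun a b hab => by rw [N.edge_layer a b hab]; omega)
  exact List.inj_on_of_nodup_map hlt.pairwise.nodup hx hy h

end TwoUnicastNetwork

section Interference

variable {V : Type*} [Fintype V] {N : TwoUnicastNetwork V}

theorem InterferesOn.mono {S S' : Set V} {Ri : List V} {src v : V} (hSS' : S ⊆ S')
    (h : InterferesOn N S Ri src v) : InterferesOn N S' Ri src v := by
  obtain ⟨hv, hvRi, ⟨w, hw, hwS, hvw⟩, q, hq, hqS, hqRi⟩ := h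
  exact ⟨hSS' hv, hvRi, ⟨w, hw, hSS' hwS, hvw⟩, q, hq, fun x hx => hSS' (hqS x hx), hqRi⟩

theorem interferesOn_of_mem_path {S : Set V} {Ri R : List V} {src t v w : V}
    (hR : IsPath N.E R src t) (hdisj : R.Disjoint Ri) (hRS : ∀ x ∈ R, x ∈ S)
    (hRiS : ∀ x ∈ Ri, x ∈ S) (hv : v ∈ R) (hw : w ∈ Ri) (hvw : N.E v w) :
    InterferesOn N S Ri src v := by
  obtain ⟨q, hq, hqR⟩ := hR.exists_prefix hv
  exact ⟨hRS v hv, hdisj hv, ⟨w, hw, hRiS w hw, hvw⟩, q, hq, fun x hx => hRS x (hqR x hx),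
    fun x hx => hdisj (hqR x hx)⟩

def UniqueInterferer (N : TwoUnicastNetwork V) (Ri Ro : List V) (src : V) : Prop :=
  ∀ S : Set V, (∀ x ∈ Ri, x ∈ S) → (∀ x ∈ Ro, x ∈ S) → nInterf N S Ri src = 1

theorem not_manageable1_iff {R₁ R₂ : List V} :
    ¬ Manageable1 N R₁ R₂ ↔ UniqueInterferer N R₁ R₂ N.s2 := by
  simp [Manageable1, UniqueInterferer]

theorem not_manageable2_iff {R₁ R₂ : List V} :
    ¬ Manageable2 N R₁ R₂ ↔ UniqueInterferer N R₂ R₁ N.s1 := by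
  simp only [Manageable2, UniqueInterferer, not_exists, not_and, ne_eq, not_not]
  exact forall_congr' fun S => forall_comm

namespace UniqueInterferer

variable {Ri Ro : List V} {src : V}

theorem exists_interferers_eq_singleton (h : UniqueInterferer N Ri Ro src) :
    ∃ β ∈ Ro, {v | InterferesOn N Set.univ Ri src v} = {β} := by
  obtain ⟨β, hβ⟩ := Set.ncard_eq_one.mp <|
    h {x | x ∈ Ri ∨ x ∈ Ro} (fun _ => Or.inl) (fun _ => Or.inr)
  obtain ⟨γ, hγ⟩ := Set.ncard_eq_one.mp <| h Set.univ (fun _ _ => trivial) (fun _ _ => trivial)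
  have hβI : β ∈ {v | InterferesOn N {x | x ∈ Ri ∨ x ∈ Ro} Ri src v} :=
    hβ.symm ▸ Set.mem_singleton β
  have hβγ : β ∈ ({γ} : Set V) := hγ ▸ hβI.mono (Set.subset_univ _)
  rw [Set.mem_singleton_iff.mp hβγ] at hβI
  exact ⟨γ, hβI.1.resolve_left hβI.2.1, hγ⟩

theorem nInterf_univ_eq_one_and_nDirect_eq_one (h : UniqueInterferer N Ri Ro src) :
    nInterf N Set.univ Ri src = 1 ∧ nDirect N Ri Ro src = 1 := by
  obtain ⟨β, hβRo, hβ⟩ := h.exists_interferers_eq_singleton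
  have hdirect : {v | InterferesOn N Set.univ Ri src v ∧ v ∈ Ro} = {β} := by
    rw [Set.ofPred_and, hβ, Set.singleton_inter_of_mem (s := {a | a ∈ Ro}) hβRo]
  rw [nInterf, nDirect, hβ, hdirect, Set.ncard_singleton]
  exact ⟨rfl, rfl⟩

/-- Comparing `G[S]` with `G[S ∪ Ro]` shows that `G[S]` has no interferer on `Ri` at all. -/
theorem nDirect_eq_zero (h : UniqueInterferer N Ri Ro src) {S : Set V} (hRiS : ∀ x ∈ Ri, x ∈ S)
    {R : List V} (hRS : ∀ x ∈ R, x ∈ S) (hS : nInterf N S Ri src ≠ 1) {t : V}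
    (hR : IsPath N.E R src t) (hdisj : R.Disjoint Ri) : nDirect N Ri R src = 0 := by
  have hle : nInterf N S Ri src ≤ 1 :=
    h (S ∪ {x | x ∈ Ro}) (fun x hx => Or.inl (hRiS x hx)) (fun x hx => Or.inr hx) ▸
      Set.ncard_le_ncard (fun v hv => InterferesOn.mono Set.subset_union_left hv)
  have hnone : {v | InterferesOn N S Ri src v} = ∅ :=
    (Set.ncard_eq_zero).mp (by rw [nInterf] at hle hS; omega)
  rw [nDirect, Set.ncard_eq_zero]
  refine Set.eq_empty_of_forall_notMem ?_
  rintro v ⟨⟨-, -, ⟨w, hw, -, hvw⟩, -⟩, hv⟩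
  have hvS : v ∈ {v | InterferesOn N S Ri src v} :=
    interferesOn_of_mem_path hR hdisj hRS hRiS hv hw hvw
  simp [hnone] at hvS

end UniqueInterferer

end Interference

section EntryPoint

variable {V : Type*} [Fintype V] {N : TwoUnicastNetwork V} {Z : List V} {src β : V}

theorem exists_edge_from_interferer (hβ : {u | InterferesOn N Set.univ Z src u} = {β})
    (hsrc : src ∉ Z) {A B : List V} {a b t : V} (hA : IsPath N.E A src a) (hab : N.E a b)
    (hB : IsPath N.E B b t) (ht : t ∈ Z) :
    ∃ z ∈ Z, N.E β z ∧ (z ∈ A ∨ (a = β ∧ b = z) ∨ β ∈ B) := by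
  obtain ⟨pre, u, z, suf, hsplit, hu, huZ, hz, huz⟩ :=
    (hA.append hab hB).exists_first_entry (T := {x | x ∈ Z}) hsrc ht
  have huI : InterferesOn N Set.univ Z src u :=
    ⟨trivial, huZ u (by simp), ⟨z, hz, trivial, huz⟩, _, hu, fun _ _ => trivial, huZ⟩
  obtain rfl : u = β := (hβ ▸ huI : u ∈ ({β} : Set V))
  refine ⟨z, hz, huz, ?_⟩
  rcases List.adjacent_mem_append hsplit with hzA | ⟨hlast, hhead⟩ | huB
  · exact Or.inl hzA
  · rw [hA.2.2.1, Option.some_inj] at hlast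
    rw [hB.2.1, Option.some_inj] at hhead
    exact Or.inr (Or.inl ⟨hlast, hhead⟩)
  · exact Or.inr (Or.inr huB)

variable {P Q : List V} {t : V}

theorem eq_interferer_and_mem_of_edge (hβ : {u | InterferesOn N Set.univ Z N.s2 u} = {β})
    (hβP : β ∈ P) (hP : IsPath N.E P N.s2 t) (hQ : IsPath N.E Q N.s1 N.d1)
    (hZ : IsPath N.E Z N.s1 N.d1) (hQP : Q.Disjoint P) (hZP : Z.Disjoint P) {v w : V}
    (hv : v ∈ P) (hw : w ∈ Q) (hvw : N.E v w) : v = β ∧ w ∈ Z := by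
  obtain ⟨A, hA, hAP⟩ := hP.exists_prefix hv
  obtain ⟨B, hB, hBQ⟩ := hQ.exists_suffix hw
  obtain ⟨z, hz, -, hzA | ⟨rfl, rfl⟩ | hβB⟩ :=
    exists_edge_from_interferer hβ (fun h => hZP h hP.head_mem) hA hvw hB hZ.last_mem
  · exact absurd (hAP z hzA) (hZP hz)
  · exact ⟨rfl, hz⟩
  · exact absurd hβP (hQP (hBQ β hβB))

theorem eq_interferer_of_interferesOn (hβ : {u | InterferesOn N Set.univ Z N.s2 u} = {β})
    (hβQ : β ∉ Q) (hs2Z : N.s2 ∉ Z) (hQ : IsPath N.E Q N.s1 N.d1)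
    (hZ : IsPath N.E Z N.s1 N.d1) {w : V} (hwQ : w ∈ Q) (hwZ : w ∈ Z) (hβw : N.E β w)
    {S : Set V} {a : V} (ha : InterferesOn N S Q N.s2 a) : a = β := by
  obtain ⟨-, -, ⟨b, hb, -, hab⟩, q, hq, -, hqQ⟩ := ha
  obtain ⟨B, hB, hBQ⟩ := hQ.exists_suffix hb
  obtain ⟨z, hz, hβz, hzq | ⟨rfl, -⟩ | hβB⟩ :=
    exists_edge_from_interferer hβ hs2Z hq hab hB hZ.last_mem
  · -- `z` and `w` are successors of `β`, so they lie in the same layer of the path `Z`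
    have hzw : z = w := N.eq_of_layer_eq hZ.2.2.2 hz hwZ
      (by rw [N.edge_layer _ _ hβz, N.edge_layer _ _ hβw])
    exact absurd (hzw ▸ hwQ) (hqQ z hzq)
  · rfl
  · exact absurd (hBQ β hβB) hβQ

/-- A direct interferer `v ∈ P` on `Q` would be the entry point `β` of `Z`, and then the only
interferer on `Q` in every `G[S]`, against `(s₁,d₁)`-manageability of `(Q, P)`. -/
theorem nDirect_eq_zero_of_manageable1 (hβ : {u | InterferesOn N Set.univ Z N.s2 u} = {β})
    (hβP : β ∈ P) (hP : IsPath N.E P N.s2 t) (hQ : IsPath N.E Q N.s1 N.d1)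
    (hZ : IsPath N.E Z N.s1 N.d1) (hQP : Q.Disjoint P) (hZP : Z.Disjoint P)
    (hman : Manageable1 N Q P) : nDirect N Q P N.s2 = 0 := by
  obtain ⟨S, hQS, hPS, hS⟩ := hman
  rw [nDirect, Set.ncard_eq_zero]
  refine Set.eq_empty_of_forall_notMem ?_
  rintro v ⟨⟨-, -, ⟨w, hw, -, hvw⟩, -⟩, hv⟩
  obtain ⟨rfl, hwZ⟩ := eq_interferer_and_mem_of_edge hβ hβP hP hQ hZ hQP hZP hv hw hvw
  refine hS ?_
  have hone : {a | InterferesOn N S Q N.s2 a} = {v} :=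
    Set.eq_singleton_iff_unique_mem.mpr
      ⟨interferesOn_of_mem_path hP hQP.symm hPS hQS hv hw hvw,
        fun a ha => eq_interferer_of_interferesOn hβ (hQP.symm hv) (fun h => hZP h hP.head_mem)
          hQ hZ hw hwZ hvw ha⟩
  rw [nInterf, hone, Set.ncard_singleton]

end EntryPoint

theorem statement17_general {V : Type*} [Fintype V]
    (N : TwoUnicastNetwork V)
    (P22 Q11 Z11 : List V)
    (hP22 : IsPath N.E P22 N.s2 N.d2)
    (hQ11 : IsPath N.E Q11 N.s1 N.d1)
    (hZ11 : IsPath N.E Z11 N.s1 N.d1)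
    (hQdisj : Q11.Disjoint P22)
    (hZdisj : Z11.Disjoint P22)
    (hQ1 : Manageable1 N Q11 P22)
    (hQ2 : ¬ Manageable2 N Q11 P22)
    (hZ2 : Manageable2 N Z11 P22)
    (hZ1 : ¬ Manageable1 N Z11 P22) :
    (nInterf N Set.univ Z11 N.s2 = 1 ∧ nDirect N Z11 P22 N.s2 = 1) ∧
    (nInterf N Set.univ P22 N.s1 = 1 ∧ nDirect N P22 Q11 N.s1 = 1) ∧
    nDirect N Q11 P22 N.s2 = 0 ∧
    nDirect N P22 Z11 N.s1 = 0 := by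
  have hZuniq := not_manageable1_iff.mp hZ1
  have hPuniq := not_manageable2_iff.mp hQ2
  obtain ⟨β, hβP, hβ⟩ := hZuniq.exists_interferers_eq_singleton
  obtain ⟨S, hZS, hPS, hS⟩ := hZ2
  exact ⟨hZuniq.nInterf_univ_eq_one_and_nDirect_eq_one,
    hPuniq.nInterf_univ_eq_one_and_nDirect_eq_one,
    nDirect_eq_zero_of_manageable1 hβ hβP hP22 hQ11 hZ11 hQdisj hZdisj hQ1,
    hPuniq.nDirect_eq_zero hPS hZS hS hZ11 hZdisj⟩

theorem statement17 {V : Type*} [Fintype V]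
    (N : TwoUnicastNetwork V)
    (P22 Q11 Z11 : List V)
    (hP22 : IsPath N.E P22 N.s2 N.d2)
    (hQ11 : IsPath N.E Q11 N.s1 N.d1)
    (hZ11 : IsPath N.E Z11 N.s1 N.d1)
    (hQdisj : Q11.Disjoint P22)
    (hZdisj : Z11.Disjoint P22)
    (hNoMan : ∀ R1 R2 : List V, IsPath N.E R1 N.s1 N.d1 → IsPath N.E R2 N.s2 N.d2 →
      R1.Disjoint R2 → ¬ Manageable N R1 R2)
    (hQ1 : Manageable1 N Q11 P22)
    (hQ2 : ¬ Manageable2 N Q11 P22)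
    (hZ2 : Manageable2 N Z11 P22)
    (hZ1 : ¬ Manageable1 N Z11 P22) :
    (nInterf N Set.univ Z11 N.s2 = 1 ∧ nDirect N Z11 P22 N.s2 = 1) ∧
    (nInterf N Set.univ P22 N.s1 = 1 ∧ nDirect N P22 Q11 N.s1 = 1) ∧
    nDirect N Q11 P22 N.s2 = 0 ∧
    nDirect N P22 Z11 N.s1 = 0 :=
  statement17_general N P22 Q11 Z11 hP22 hQ11 hZ11 hQdisj hZdisj hQ1 hQ2 hZ2 hZ1
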